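/- arXiv:math/0208146 — 8 statements merged into one kernel-verified Lean document; each statement's English description precedes it below -/
import Mathlib

section
/- Let R be a division ring and A a 2×2 matrix over R with all entries nonzero. Then the row homological relation holds: -|A|₁₁ · (a₂₁)⁻¹ = |A|₁₂ · (a₂₂)⁻¹, where |A|₁₁ = a₁₁ - a₁₂a₂₂⁻¹a₂₁ and |A|₁₂ = a₁₂ - a₁₁a₂₁⁻¹a₂₂. -/
/-- Row homological relation for a 2×2 matrix over a division ring:
`-|A|₁₁ · a₂₁⁻¹ = |A|₁₂ · a₂₂⁻¹`. -/
theorem row_homological_relation_two_by_two {R : Type*} [DivisionRing R]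
    (a11 a12 a21 a22 : R) (h11 : a11 ≠ 0) (h12 : a12 ≠ 0) (h21 : a21 ≠ 0)
    (h22 : a22 ≠ 0) :
    -(a11 - a12 * a22⁻¹ * a21) * a21⁻¹ = (a12 - a11 * a21⁻¹ * a22) * a22⁻¹ := by
  simp only [neg_sub, sub_mul, mul_assoc, mul_inv_cancel₀ h21, mul_inv_cancel₀ h22, mul_one]
end

section
/- Let R be a commutative field and A an n×n matrix over R whose (p,q)-minor submatrix A^{pq} (obtained by deleting row p and column q) has nonzero determinant. Then the quasideterminant satisfies |A|_{pq} = (-1)^{p+q} · det A / det A^{pq}, where |A|_{pq} = a_{pq} - r_p^q (A^{pq})⁻¹ c_q^p, with r_p^q the p-th row of A with entry a_{pq} deleted and c_q^p the q-th column of A with entry a_{pq} deleted. -/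
/-- Over a field, the quasideterminant is a ratio of determinants:
`|A|_{pq} = (-1)^{p+q} · det A / det A^{pq}` whenever the minor `A^{pq}` obtained by
deleting row `p` and column `q` has nonzero determinant. -/
theorem quasideterminant_eq_ratio_of_dets {K : Type*} [Field K] {n : ℕ}
    (A : Matrix (Fin (n + 1)) (Fin (n + 1)) K) (p q : Fin (n + 1))
    (h : (A.submatrix p.succAbove q.succAbove).det ≠ 0) :
    A p q - ∑ j : Fin n, ∑ i : Fin n,
        A p (q.succAbove j) * (A.submatrix p.succAbove q.succAbove)⁻¹ j i *
          A (p.succAbove i) q =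
      (-1 : K) ^ ((p : ℕ) + (q : ℕ)) * A.det /
        (A.submatrix p.succAbove q.succAbove).det := by
  set M := A.submatrix p.succAbove q.succAbove with hM
  haveI : Invertible M := M.invertibleOfIsUnitDet (isUnit_iff_ne_zero.mpr h)
  -- the equiv Fin 1 ⊕ Fin n ≃ Fin (n+1)
  let e : Fin 1 ⊕ Fin n ≃ Fin (n + 1) :=
    finSumFinEquiv.trans (finCongr (Nat.add_comm 1 n))
  have he0 : ∀ x : Fin 1, e (Sum.inl x) = 0 := by
    intro x
    fin_cases x
    ext
    simp [e]
  have heS : ∀ i : Fin n, e (Sum.inr i) = i.succ := by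
    intro i
    ext
    simp [e, Nat.add_comm]
  -- the block matrix
  have hblock :
      (Matrix.fromBlocks (Matrix.of fun _ _ : Fin 1 => A p q)
        (Matrix.of fun (_ : Fin 1) j => A p (q.succAbove j))
        (Matrix.of fun i (_ : Fin 1) => A (p.succAbove i) q) M) =
      (A.submatrix p.cycleRange.symm q.cycleRange.symm).submatrix e e := by
    ext i j
    cases i <;> cases j <;>
      simp [he0, heS, Matrix.submatrix, hM]
  have hdetB : (A.submatrix p.cycleRange.symm q.cycleRange.symm).det =
      (-1 : K) ^ ((p : ℕ) + (q : ℕ)) * A.det := by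
    have h1 : A.submatrix p.cycleRange.symm q.cycleRange.symm =
        (A.submatrix p.cycleRange.symm id).submatrix id q.cycleRange.symm := rfl
    rw [h1, Matrix.det_permute' _ _, Matrix.det_permute _ _]
    simp [pow_add, mul_assoc, mul_left_comm]
  have hschur := Matrix.det_fromBlocks₂₂ (Matrix.of fun _ _ : Fin 1 => A p q)
    (Matrix.of fun (_ : Fin 1) j => A p (q.succAbove j))
    (Matrix.of fun i (_ : Fin 1) => A (p.succAbove i) q) M
  rw [hblock, Matrix.det_submatrix_equiv_self, hdetB, Matrix.invOf_eq_nonsing_inv] at hschur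
  have hentry : (Matrix.of (fun _ _ : Fin 1 => A p q) -
      Matrix.of (fun (_ : Fin 1) j => A p (q.succAbove j)) * M⁻¹ *
        Matrix.of (fun i (_ : Fin 1) => A (p.succAbove i) q)).det =
      A p q - ∑ j : Fin n, ∑ i : Fin n,
        A p (q.succAbove j) * M⁻¹ j i * A (p.succAbove i) q := by
    rw [Matrix.det_fin_one]
    simp [Matrix.mul_apply, Finset.sum_mul]
    rw [Finset.sum_comm]
  rw [hentry] at hschur
  rw [eq_div_iff h]
  linear_combination -hschur
end

section
/- Let A be an m×m matrix and B an n×n matrix over a division ring R such that the quasideterminants |A|ᵢⱼ and |B|_{αβ} are defined (i.e. the relevant submatrices are invertible). Then the quasideterminant of the Kronecker product A ⊗ B at position (iα, jβ) is defined and equals |A|ᵢⱼ · |B|_{αβ}. -/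
/-- Quasideterminants (defined via the inverse matrix:
`|M|_{pq} = ((M⁻¹)_{qp})⁻¹`) are multiplicative with respect to the Kronecker
tensor product: `|A ⊗ B|_{iα,jβ} = |A|_{ij} · |B|_{αβ}`. -/
theorem quasideterminant_kronecker {R : Type*} [DivisionRing R] {m n : ℕ}
    (A A' : Matrix (Fin m) (Fin m) R) (B B' : Matrix (Fin n) (Fin n) R)
    (hA : A * A' = 1 ∧ A' * A = 1) (hB : B * B' = 1 ∧ B' * B = 1)
    (C C' : Matrix (Fin m × Fin n) (Fin m × Fin n) R)
    (hC : C = fun p q => A p.1 q.1 * B p.2 q.2)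
    (hC' : C * C' = 1 ∧ C' * C = 1)
    (i j : Fin m) (α β : Fin n)
    (hAij : A' j i ≠ 0) (hBαβ : B' β α ≠ 0) :
    C' (j, β) (i, α) ≠ 0 ∧
    (C' (j, β) (i, α))⁻¹ = (A' j i)⁻¹ * (B' β α)⁻¹ := by
  obtain ⟨hAA', hA'A⟩ := hA
  obtain ⟨hBB', hB'B⟩ := hB
  set D : Matrix (Fin m × Fin n) (Fin m × Fin n) R :=
    fun p q => B' p.2 q.2 * A' p.1 q.1 with hD
  have hCD : C * D = 1 := by
    ext ⟨i', α'⟩ ⟨j', β'⟩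
    rw [Matrix.mul_apply, Fintype.sum_prod_type]
    have hsum : ∀ k, ∑ γ, C (i', α') (k, γ) * D (k, γ) (j', β')
        = A i' k * ((B * B') α' β' * A' k j') := by
      intro k
      rw [Matrix.mul_apply, Finset.sum_mul, Finset.mul_sum]
      refine Finset.sum_congr rfl fun γ _ => ?_
      simp only [hC, hD, mul_assoc]
    simp only [hsum, hBB']
    rcases eq_or_ne α' β' with rfl | hαβ
    · simp only [Matrix.one_apply_eq, one_mul]
      rw [← Matrix.mul_apply, hAA']
      simp [Matrix.one_apply, Prod.ext_iff]
    · simp [Matrix.one_apply, Prod.ext_iff, hαβ]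
  have hC'D : C' = D := by
    calc C' = C' * (C * D) := by rw [hCD, mul_one]
    _ = (C' * C) * D := (mul_assoc _ _ _).symm
    _ = D := by rw [hC'.2, one_mul]
  rw [hC'D]
  exact ⟨mul_ne_zero hBαβ hAij, by rw [mul_inv_rev]⟩
end

section
/- Let R be a division ring and A = (aᵢⱼ) an n×n matrix over R such that the quasideterminant |A|ᵢⱼ is defined. Then |A|ᵢⱼ = 0 if and only if the i-th row of A is a left linear combination of the other rows of A, if and only if the j-th column of A is a right linear combination of the other columns of A. -/
/-- For an `(n+1)×(n+1)` matrix over a division ring whose `(i,j)`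
quasideterminant is defined (the minor `A^{ij}` has a two-sided inverse `N`),
`|A|_{ij} = 0` iff row `i` is a left linear combination of the other rows, iff
column `j` is a right linear combination of the other columns. -/
theorem quasideterminant_zero_iff_linear_dependence {R : Type*} [DivisionRing R]
    {n : ℕ} (A : Matrix (Fin (n + 1)) (Fin (n + 1)) R) (i j : Fin (n + 1))
    (N : Matrix (Fin n) (Fin n) R)
    (hN : A.submatrix i.succAbove j.succAbove * N = 1 ∧
          N * A.submatrix i.succAbove j.succAbove = 1) :
    (A i j - ∑ l : Fin n, ∑ k : Fin n,
        A i (j.succAbove l) * N l k * A (i.succAbove k) j = 0 ↔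
      ∃ c : Fin n → R, ∀ col : Fin (n + 1),
        A i col = ∑ k : Fin n, c k * A (i.succAbove k) col) ∧
    (A i j - ∑ l : Fin n, ∑ k : Fin n,
        A i (j.succAbove l) * N l k * A (i.succAbove k) j = 0 ↔
      ∃ d : Fin n → R, ∀ row : Fin (n + 1),
        A row j = ∑ l : Fin n, A row (j.succAbove l) * d l) := by
  obtain ⟨hMN, hNM⟩ := hN
  have hMN' : ∀ k l : Fin n, (∑ x, A (i.succAbove k) (j.succAbove x) * N x l)
      = if k = l then (1:R) else 0 := by
    intro k l
    have := congrFun (congrFun hMN k) l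
    simpa [Matrix.mul_apply, Matrix.one_apply] using this
  have hNM' : ∀ k l : Fin n, (∑ x, N k x * A (i.succAbove x) (j.succAbove l))
      = if k = l then (1:R) else 0 := by
    intro k l
    have := congrFun (congrFun hNM k) l
    simpa [Matrix.mul_apply, Matrix.one_apply] using this
  constructor
  · constructor
    · intro h
      refine ⟨fun k => ∑ l, A i (j.succAbove l) * N l k, ?_⟩
      intro col
      rcases eq_or_ne col j with rfl | hcol
      · have h' := sub_eq_zero.mp h
        rw [h', Finset.sum_comm]
        simp [Finset.sum_mul]
      · obtain ⟨m, rfl⟩ := Fin.exists_succAbove_eq hcol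
        symm
        calc (∑ k, (∑ l, A i (j.succAbove l) * N l k) * A (i.succAbove k) (j.succAbove m))
            = ∑ k, ∑ l, A i (j.succAbove l) * (N l k * A (i.succAbove k) (j.succAbove m)) := by
              simp [Finset.sum_mul, mul_assoc]
          _ = ∑ l, A i (j.succAbove l) * ∑ k, N l k * A (i.succAbove k) (j.succAbove m) := by
              rw [Finset.sum_comm]; simp [Finset.mul_sum]
          _ = A i (j.succAbove m) := by
              simp only [hNM']
              simp
    · rintro ⟨c, hc⟩
      have key : (∑ l, ∑ k, A i (j.succAbove l) * N l k * A (i.succAbove k) j) = A i j := by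
        calc (∑ l, ∑ k, A i (j.succAbove l) * N l k * A (i.succAbove k) j)
            = ∑ l, ∑ k, (∑ k', c k' * A (i.succAbove k') (j.succAbove l))
                * N l k * A (i.succAbove k) j := by
              simp only [← hc]
          _ = ∑ k', c k' * ∑ k, (∑ l, A (i.succAbove k') (j.succAbove l) * N l k)
                * A (i.succAbove k) j := by
              simp only [Finset.sum_mul, Finset.mul_sum, mul_assoc]
              rw [Finset.sum_comm]
              conv_rhs => rw [Finset.sum_comm]
              exact Finset.sum_congr rfl fun k _ => Finset.sum_comm
          _ = ∑ k', c k' * A (i.succAbove k') j := by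
              refine Finset.sum_congr rfl fun k' _ => ?_
              congr 1
              simp only [hMN']
              simp
          _ = A i j := (hc j).symm
      rw [key, sub_self]
  · constructor
    · intro h
      refine ⟨fun l => ∑ k, N l k * A (i.succAbove k) j, ?_⟩
      intro row
      rcases eq_or_ne row i with rfl | hrow
      · have h' := sub_eq_zero.mp h
        rw [h']
        simp [Finset.mul_sum, mul_assoc]
      · obtain ⟨m, rfl⟩ := Fin.exists_succAbove_eq hrow
        symm
        calc (∑ l, A (i.succAbove m) (j.succAbove l) * ∑ k, N l k * A (i.succAbove k) j)
            = ∑ l, ∑ k, A (i.succAbove m) (j.succAbove l) * N l k * A (i.succAbove k) j := by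
              simp [Finset.mul_sum, mul_assoc]
          _ = ∑ k, (∑ l, A (i.succAbove m) (j.succAbove l) * N l k) * A (i.succAbove k) j := by
              rw [Finset.sum_comm]; simp [Finset.sum_mul]
          _ = A (i.succAbove m) j := by
              simp only [hMN']
              simp
    · rintro ⟨d, hd⟩
      have key : (∑ l, ∑ k, A i (j.succAbove l) * N l k * A (i.succAbove k) j) = A i j := by
        calc (∑ l, ∑ k, A i (j.succAbove l) * N l k * A (i.succAbove k) j)
            = ∑ l, ∑ k, A i (j.succAbove l) * N l k
                * ∑ l', A (i.succAbove k) (j.succAbove l') * d l' := by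
              simp only [← hd]
          _ = ∑ l, A i (j.succAbove l) * ∑ l', (∑ k, N l k * A (i.succAbove k) (j.succAbove l'))
                * d l' := by
              refine Finset.sum_congr rfl fun l _ => ?_
              simp only [Finset.mul_sum, Finset.sum_mul, mul_assoc]
              rw [Finset.sum_comm]
          _ = ∑ l, A i (j.succAbove l) * d l := by
              refine Finset.sum_congr rfl fun l _ => ?_
              congr 1
              simp only [hNM']
              simp
          _ = A i j := (hd i).symm
      rw [key, sub_self]
end

section
/- Let R be a division ring and a₁₁,…,a₁ₙ, a₂₂,…,a₂ₙ,…,aₙₙ elements of R. The quasideterminant |A|₁ₙ of the almost-triangular n×n matrix A with aᵢⱼ for i ≤ j, -1 in positions (i+1, i), and 0 below the subdiagonal, equals the polynomial a₁ₙ + Σ_{1 ≤ j₁ < j₂ < ⋯ < jₖ < n} a_{1,j₁} a_{j₁+1, j₂} a_{j₂+1, j₃} ⋯ a_{jₖ+1, n}. -/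
/-!
Write `M` for `A` with its first row and last column deleted, `r` for the rest of the first row
and `c` for the rest of the last column, so that the quasideterminant is `a₁ₙ - r M⁻¹ c`.
Summing over chains by their first element gives the recursion
`P(s, t) = a_{st} + Σ_{s ≤ j < t} a_{sj} P(j + 1, t)` for the chain sums `P`. Row `i` of `M`
is `-1` in column `i - 1` followed by `a_{ii}, …, a_{i,n-1}`, so the recursion at `s = i` says
that `x_k = -P(k + 1, n)` solves `M x = c`; at `s = 1` it turns `a₁ₙ - r x` into `P(1, n)`.
-/

/-- Product along a chain: `chainProd a N i [j₁, …, jₖ] = a i j₁ * a (j₁+1) j₂ * ⋯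
* a (jₖ+1) N`, with `chainProd a N i [] = a i N`. -/
def chainProd {R : Type*} [Ring R] (a : ℕ → ℕ → R) (N : ℕ) : ℕ → List ℕ → R
  | i, [] => a i N
  | i, j :: l => a i j * chainProd a N (j + 1) l

open Finset Matrix

theorem Finset.sum_powerset_Ico_eq_add_sum_insert_min {M : Type*} [AddCommMonoid M]
    (F : Finset ℕ → M) (s t : ℕ) :
    ∑ S ∈ (Ico s t).powerset, F S =
      F ∅ + ∑ j ∈ Ico s t, ∑ S ∈ (Ico (j + 1) t).powerset, F (insert j S) := by
  induction h : t - s generalizing s with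
  | zero => simp [Ico_eq_empty_of_le (by omega : t ≤ s)]
  | succ k ih =>
    have hs : s ∉ Ico (s + 1) t := by simp
    rw [← insert_Ico_add_one_left_eq_Ico (by omega : s < t), sum_powerset_insert hs,
      ih (s + 1) (by omega), sum_insert hs]
    abel

section Ring

variable {R : Type*} [Ring R] (a : ℕ → ℕ → R)

def chainSum (s t : ℕ) : R :=
  ∑ S ∈ (Ico s t).powerset, chainProd a t s (S.sort (· ≤ ·))

theorem chainSum_eq_add_sum (s t : ℕ) :
    chainSum a s t = a s t + ∑ j ∈ Ico s t, a s j * chainSum a (j + 1) t := by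
  rw [chainSum, sum_powerset_Ico_eq_add_sum_insert_min]
  congr 1
  · rw [sort_empty, chainProd]
  refine sum_congr rfl fun j _ => ?_
  rw [chainSum, mul_sum]
  refine sum_congr rfl fun S hS => ?_
  have hlt : ∀ b ∈ S, j < b := fun b hb => (mem_Ico.1 (mem_powerset.1 hS hb)).1
  rw [sort_insert _ (fun b hb => (hlt b hb).le) (fun hj => lt_irrefl j (hlt j hj)), chainProd]

theorem chainSum_succ_succ (s t : ℕ) :
    chainSum a (s + 1) (t + 1) =
      a (s + 1) (t + 1) + ∑ k ∈ Ico s t, a (s + 1) (k + 1) * chainSum a (k + 2) (t + 1) := by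
  rw [chainSum_eq_add_sum,
    ← sum_Ico_add' (fun j => a (s + 1) j * chainSum a (j + 1) (t + 1)) s t 1]

def almostTriangular (n : ℕ) : Matrix (Fin (n + 1)) (Fin (n + 1)) R := fun i j =>
  if (i : ℕ) ≤ (j : ℕ) then a ((i : ℕ) + 1) ((j : ℕ) + 1)
  else if (i : ℕ) = (j : ℕ) + 1 then -1 else 0

theorem almostTriangular_submatrix_mulVec (n : ℕ) :
    (almostTriangular a n).submatrix Fin.succ Fin.castSucc *ᵥ
        (fun k => -chainSum a (k + 2) (n + 1)) =
      fun j => almostTriangular a n j.succ (Fin.last n) := by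
  ext ⟨j, hj⟩
  let f : ℕ → R := fun k => (if j + 1 ≤ k then a (j + 1 + 1) (k + 1)
    else if j + 1 = k + 1 then -1 else 0) * -chainSum a (k + 2) (n + 1)
  have hlow : ∑ k ∈ range j, f k = 0 := sum_eq_zero fun k hk => by
    have := mem_range.1 hk
    simp only [f]
    rw [if_neg (by omega), if_neg (by omega), zero_mul]
  have hhigh : ∑ k ∈ Ico (j + 1) n, f k =
      -∑ k ∈ Ico (j + 1) n, a (j + 1 + 1) (k + 1) * chainSum a (k + 2) (n + 1) := by
    rw [← sum_neg_distrib]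
    refine sum_congr rfl fun k hk => ?_
    simp only [f]
    rw [if_pos (mem_Ico.1 hk).1, mul_neg]
  calc ∑ k : Fin n, _ = ∑ k ∈ range n, f k := Fin.sum_univ_eq_sum_range f n
    _ = ∑ k ∈ range j, f k + f j + ∑ k ∈ Ico (j + 1) n, f k := by
      rw [← sum_range_succ, sum_range_add_sum_Ico _ hj]
    _ = a (j + 1 + 1) (n + 1) := by
      rw [hlow, hhigh]
      simp only [f, show ¬j + 1 ≤ j by omega, if_false, if_true]
      rw [show j + 2 = j + 1 + 1 from rfl, chainSum_succ_succ]
      noncomm_ring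
    _ = _ := by simp [almostTriangular, Nat.succ_le_of_lt hj]

end Ring

/-- The `(1,n)` quasideterminant of the almost upper-triangular
matrix (with `aᵢⱼ` for `i ≤ j`, `-1` on the subdiagonal, `0` below it) equals
`a₁ₙ + Σ_{1 ≤ j₁ < ⋯ < jₖ < n} a_{1j₁} a_{j₁+1,j₂} ⋯ a_{jₖ+1,n}`.
(Here the matrix has size `n + 1` in Lean, i.e. `n + 1` plays the role of the
paper's `n`, with 1-based entries `a i j`.) -/
theorem quasideterminant_almost_triangular {R : Type*} [DivisionRing R] {n : ℕ}
    (a : ℕ → ℕ → R)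
    (A : Matrix (Fin (n + 1)) (Fin (n + 1)) R)
    (hA : ∀ i j : Fin (n + 1),
      A i j = if (i : ℕ) ≤ (j : ℕ) then a ((i : ℕ) + 1) ((j : ℕ) + 1)
        else if (i : ℕ) = (j : ℕ) + 1 then -1 else 0)
    (N : Matrix (Fin n) (Fin n) R)
    (hN : A.submatrix (Fin.succAbove 0) (Fin.succAbove (Fin.last n)) * N = 1 ∧
          N * A.submatrix (Fin.succAbove 0) (Fin.succAbove (Fin.last n)) = 1) :
    A 0 (Fin.last n) - ∑ j : Fin n, ∑ i : Fin n,
        A 0 ((Fin.last n).succAbove j) * N j i * A ((0 : Fin (n + 1)).succAbove i) (Fin.last n) =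
      ∑ S ∈ (Finset.Ico 1 (n + 1)).powerset,
        chainProd a (n + 1) 1 (Finset.sort S (· ≤ ·)) := by
  obtain rfl : A = almostTriangular a n := Matrix.ext hA
  rw [Fin.succAbove_zero, Fin.succAbove_last] at hN ⊢
  have hNc : N *ᵥ (fun i => almostTriangular a n i.succ (Fin.last n)) =
      fun k : Fin n => -chainSum a (k + 2) (n + 1) := by
    rw [← almostTriangular_submatrix_mulVec, mulVec_mulVec, hN.2, one_mulVec]
  calc _ = almostTriangular a n 0 (Fin.last n) -
        (fun j => almostTriangular a n 0 j.castSucc) ⬝ᵥ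
          (N *ᵥ fun i => almostTriangular a n i.succ (Fin.last n)) := by
        simp only [dotProduct, mulVec, mul_sum, mul_assoc]
    _ = a 1 (n + 1) + ∑ k ∈ range n, a 1 (k + 1) * chainSum a (k + 2) (n + 1) := by
        rw [hNc]
        simp [dotProduct, almostTriangular,
          ← Fin.sum_univ_eq_sum_range (fun k => a 1 (k + 1) * chainSum a (k + 2) (n + 1))]
    _ = chainSum a 1 (n + 1) := by simpa using (chainSum_succ_succ a 0 n).symm
end

section
/- Let R be a division ring and x₁, x₂ ∈ R with x₂ - x₁ invertible. Set y₁ = x₁ and y₂ = (x₂ - x₁)·x₂·(x₂ - x₁)⁻¹. Then Λ₁ = y₁ + y₂ and Λ₂ = y₂·y₁ are symmetric in x₁ and x₂: swapping x₁ ↔ x₂ (using x₁ - x₂ invertible as well) yields the same elements. Explicitly, (x₂-x₁)x₂(x₂-x₁)⁻¹ + x₁ = (x₁-x₂)x₁(x₁-x₂)⁻¹ + x₂ and (x₂-x₁)x₂(x₂-x₁)⁻¹·x₁ = (x₁-x₂)x₁(x₁-x₂)⁻¹·x₂. -/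
theorem aux_symm_two {R : Type*} [Ring R] (d u x₁ : R) (hdu : d * u = 1) (hud : u * d = 1) :
    d * (d + x₁) * u + x₁ = d * x₁ * u + (d + x₁) ∧
    d * (d + x₁) * u * x₁ = d * x₁ * u * (d + x₁) := by
  constructor
  · have h1 : d * d * u = d := by rw [mul_assoc, hdu, mul_one]
    calc d * (d + x₁) * u + x₁ = d * d * u + (d * x₁ * u + x₁) := by noncomm_ring
      _ = d * x₁ * u + (d + x₁) := by rw [h1]; noncomm_ring
  · have h1 : d * d * u * x₁ = d * x₁ := by rw [mul_assoc d d, hdu, mul_one]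
    have h2 : d * x₁ * u * d = d * x₁ := by rw [mul_assoc, hud, mul_one]
    calc d * (d + x₁) * u * x₁ = d * d * u * x₁ + d * x₁ * u * x₁ := by noncomm_ring
      _ = d * x₁ * u * d + d * x₁ * u * x₁ := by rw [h1, h2]
      _ = d * x₁ * u * (d + x₁) := by noncomm_ring

/-- Symmetry of the noncommutative elementary symmetric functions
`Λ₁ = y₁ + y₂` and `Λ₂ = y₂·y₁` in `x₁, x₂`, where `y₁ = x₁` and
`y₂ = (x₂-x₁)x₂(x₂-x₁)⁻¹`. -/
theorem noncommutative_elementary_symmetric_two {R : Type*} [DivisionRing R]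
    (x₁ x₂ : R) (h : x₂ - x₁ ≠ 0) :
    (x₂ - x₁) * x₂ * (x₂ - x₁)⁻¹ + x₁ = (x₁ - x₂) * x₁ * (x₁ - x₂)⁻¹ + x₂ ∧
    (x₂ - x₁) * x₂ * (x₂ - x₁)⁻¹ * x₁ = (x₁ - x₂) * x₁ * (x₁ - x₂)⁻¹ * x₂ := by
  have hrw : (x₁ - x₂) * x₁ * (x₁ - x₂)⁻¹ = (x₂ - x₁) * x₁ * (x₂ - x₁)⁻¹ := by
    rw [show x₁ - x₂ = -(x₂ - x₁) from (neg_sub _ _).symm, inv_neg, neg_mul, neg_mul,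
      mul_neg, neg_neg]
  have key := aux_symm_two (x₂ - x₁) (x₂ - x₁)⁻¹ x₁ (mul_inv_cancel₀ h) (inv_mul_cancel₀ h)
  rw [sub_add_cancel] at key
  rw [hrw]
  exact key
end

section
/- Let R be a division ring and x₁, x₂ ∈ R with x₂ - x₁ invertible. Set y₁ = x₁, y₂ = (x₂-x₁)x₂(x₂-x₁)⁻¹, a₁ = -(y₁+y₂), a₂ = y₂y₁. Then both x₁ and x₂ are roots of the polynomial t² + a₁t + a₂, i.e., x₁² + a₁x₁ + a₂ = 0 and x₂² + a₁x₂ + a₂ = 0 (noncommutative Viète theorem for n = 2). -/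
/-- Noncommutative Viète theorem for `n = 2`: with `y₁ = x₁`,
`y₂ = (x₂-x₁)x₂(x₂-x₁)⁻¹`, `a₁ = -(y₁+y₂)`, `a₂ = y₂y₁`, both `x₁` and `x₂`
are roots of `t² + a₁t + a₂`. -/
theorem noncommutative_viete_two {R : Type*} [DivisionRing R]
    (x₁ x₂ : R) (h : x₂ - x₁ ≠ 0) :
    let y₁ := x₁
    let y₂ := (x₂ - x₁) * x₂ * (x₂ - x₁)⁻¹
    let a₁ := -(y₁ + y₂)
    let a₂ := y₂ * y₁
    x₁ ^ 2 + a₁ * x₁ + a₂ = 0 ∧ x₂ ^ 2 + a₁ * x₂ + a₂ = 0 := by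
  intro y₁ y₂ a₁ a₂
  have hy : y₂ * (x₂ - x₁) = (x₂ - x₁) * x₂ := by
    show (x₂ - x₁) * x₂ * (x₂ - x₁)⁻¹ * (x₂ - x₁) = _
    rw [mul_assoc, inv_mul_cancel₀ h, mul_one]
  constructor
  · show x₁ ^ 2 + -(x₁ + y₂) * x₁ + y₂ * x₁ = 0
    noncomm_ring
  · show x₂ ^ 2 + -(x₁ + y₂) * x₂ + y₂ * x₁ = 0
    have : y₂ * x₂ - y₂ * x₁ = x₂ * x₂ - x₁ * x₂ := by
      rw [← mul_sub, hy]; noncomm_ring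
    calc x₂ ^ 2 + -(x₁ + y₂) * x₂ + y₂ * x₁
        = (x₂ * x₂ - x₁ * x₂) - (y₂ * x₂ - y₂ * x₁) := by noncomm_ring
      _ = 0 := by rw [← this, sub_self]
end

section
/- Let R be a division ring, z, x₁ ∈ R with z - x₁ invertible, and define ẑ = (z-x₁)·z·(z-x₁)⁻¹. Then the 2×2 Vandermonde quasideterminant satisfies V(x₁, z) = z - x₁, and the 3×3 Vandermonde quasideterminant factorizes as V(x₁, x₂, z) = V(x̂₂, ẑ)·(z - x₁) = (ẑ - x̂₂)(z - x₁), where x̂₂ = (x₂-x₁)x₂(x₂-x₁)⁻¹, provided x₂ - x₁, z - x₁, and ẑ - x̂₂ are invertible. -/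
/-- `V(x₁,z) = z - x₁`, and the 3×3 Vandermonde quasideterminant
(the `(1,3)` quasideterminant of `[[x₁²,x₂²,z²],[x₁,x₂,z],[1,1,1]]`) factorizes as
`V(x₁,x₂,z) = (ẑ - x̂₂)(z - x₁)` where `ẑ = (z-x₁)z(z-x₁)⁻¹` and
`x̂₂ = (x₂-x₁)x₂(x₂-x₁)⁻¹`. -/
theorem vandermonde_quasideterminant_factorization {R : Type*} [DivisionRing R]
    (x₁ x₂ z : R) (h21 : x₂ - x₁ ≠ 0) (hz1 : z - x₁ ≠ 0)
    (hzh : (z - x₁) * z * (z - x₁)⁻¹ - (x₂ - x₁) * x₂ * (x₂ - x₁)⁻¹ ≠ 0)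
    (N : Matrix (Fin 2) (Fin 2) R)
    (hN : (!![x₁, x₂; 1, 1] : Matrix (Fin 2) (Fin 2) R) * N = 1 ∧
          N * !![x₁, x₂; 1, 1] = 1) :
    z - x₁ * 1⁻¹ * 1 = z - x₁ ∧
    z ^ 2 - (x₁ ^ 2 * N 0 0 * z + x₁ ^ 2 * N 0 1 * 1 +
             x₂ ^ 2 * N 1 0 * z + x₂ ^ 2 * N 1 1 * 1) =
      ((z - x₁) * z * (z - x₁)⁻¹ - (x₂ - x₁) * x₂ * (x₂ - x₁)⁻¹) * (z - x₁) := by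
  obtain ⟨hMN, hNM⟩ := hN
  obtain ⟨u, rfl⟩ : ∃ u, x₂ = u + x₁ := ⟨x₂ - x₁, by abel⟩
  simp only [add_sub_cancel_right] at h21 hzh hMN hNM ⊢
  have hdd : u⁻¹ * u = 1 := inv_mul_cancel₀ h21
  have hdd' : u * u⁻¹ = 1 := mul_inv_cancel₀ h21
  have e1 : ∀ y : R, u * (u⁻¹ * y) = y := fun y => by rw [← mul_assoc, hdd', one_mul]
  have e2 : ∀ y : R, u⁻¹ * (u * y) = y := fun y => by rw [← mul_assoc, hdd, one_mul]
  set N' : Matrix (Fin 2) (Fin 2) R := !![-(u⁻¹), u⁻¹ * (u + x₁); u⁻¹, -(u⁻¹ * x₁)] with hN'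
  have hleft : N' * !![x₁, u + x₁; 1, 1] = 1 := by
    ext i j
    fin_cases i <;> fin_cases j <;>
      simp [hN', Matrix.mul_apply, Fin.sum_univ_two, Matrix.one_apply, mul_add, e1, e2, hdd] <;>
      abel
  have hNeq : N = N' := by
    calc N = 1 * N := (one_mul N).symm
    _ = (N' * !![x₁, u + x₁; 1, 1]) * N := by rw [hleft]
    _ = N' * (!![x₁, u + x₁; 1, 1] * N) := by rw [Matrix.mul_assoc]
    _ = N' := by rw [hMN, Matrix.mul_one]
  refine ⟨by simp, ?_⟩
  rw [hNeq]
  simp only [hN', Matrix.cons_val', Matrix.cons_val_zero, Matrix.cons_val_one, Matrix.head_cons,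
    Matrix.empty_val', Matrix.cons_val_fin_one, Matrix.head_fin_const, Matrix.of_apply]
  have hz : (z - x₁) * z * (z - x₁)⁻¹ * (z - x₁) = (z - x₁) * z := by
    rw [mul_assoc, inv_mul_cancel₀ hz1, mul_one]
  rw [sub_mul, hz]
  simp only [pow_two, mul_add, add_mul, mul_sub, sub_mul, mul_assoc, neg_mul, mul_neg, neg_neg, e1, e2, hdd, hdd',
    mul_one, one_mul]
  noncomm_ring
end
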